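/- Let I be a nonempty set. For each n ∈ ℕ let a_n : I × I → ℝ and let a : I × I → ℝ, and suppose that a_n(i,j) → a(i,j) as n → ∞ for every i, j ∈ I. Suppose moreover that for each n there exist a real inner product space H_n and families (α^n_i)_{i∈I}, (β^n_j)_{j∈I} in H_n such that a_n(i,j) = ‖α^n_i − β^n_j‖²_{H_n} for all i, j ∈ I. Then there exist a real Hilbert space H and families (α_i)_{i∈I}, (β_j)_{j∈I} in H such that a(i,j) = ‖α_i − β_j‖²_H for all i, j ∈ I. -/

import Mathlib

/-- A representation of `a : I × I → ℝ` as squared distances `‖α_i - β_j‖²` between two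
families of points of a real inner product space. -/
structure SqDistInnerRepr {I : Type} (a : I × I → ℝ) where
  H : Type
  [normedAddCommGroup : NormedAddCommGroup H]
  [innerProductSpace : InnerProductSpace ℝ H]
  α : I → H
  β : I → H
  repr : ∀ i j : I, a (i, j) = ‖α i - β j‖ ^ 2

/-- A representation of `a : I × I → ℝ` as squared distances `‖α_i - β_j‖²` between two
families of points of a real Hilbert space. -/
structure SqDistHilbertRepr {I : Type} (a : I × I → ℝ) where
  H : Type
  [normedAddCommGroup : NormedAddCommGroup H]
  [innerProductSpace : InnerProductSpace ℝ H]
  [completeSpace : CompleteSpace H]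
  α : I → H
  β : I → H
  repr : ∀ i j : I, a (i, j) = ‖α i - β j‖ ^ 2

attribute [instance] SqDistInnerRepr.normedAddCommGroup SqDistInnerRepr.innerProductSpace

/-!
Centre the `n`-th configuration at `α i₀`. The Gram matrices of the centred points, indexed by
`I ⊕ I`, are then entrywise bounded in `n`. Only the `α`–`β` distances are prescribed, so they
need not converge, but by Tychonoff they converge along an ultrafilter finer than `atTop`.
The limit `K` is positive semidefinite, and `b` is read off from it as
`K(i,i) + K(j',j') - 2 K(i,j')` by continuity. Moore's theorem realizes `K` as the Gram matrix
of vectors in a Hilbert space, and these vectors represent `b`.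
-/

open Filter Topology Set
open scoped InnerProductSpace ComplexOrder

universe u

theorem IsCompact.exists_ultrafilter_tendsto {X ι : Type*} [TopologicalSpace X] {s : Set X}
    (hs : IsCompact s) {f : ι → X} {l : Filter ι} [l.NeBot] (hf : ∀ᶠ k in l, f k ∈ s) :
    ∃ u : Ultrafilter ι, ↑u ≤ l ∧ ∃ x ∈ s, Tendsto f u (𝓝 x) := by
  obtain ⟨x, hx, hux⟩ := hs.ultrafilter_le_nhds ((Ultrafilter.of l).map f)
    (le_principal_iff.2 (Ultrafilter.of_le l hf))
  exact ⟨Ultrafilter.of l, Ultrafilter.of_le l, x, hx, hux⟩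

namespace Matrix

theorem isClosed_setOf_posSemidef {n R : Type*} [Ring R] [PartialOrder R] [StarRing R]
    [TopologicalSpace R] [IsTopologicalRing R] [ContinuousStar R] [T2Space R]
    [ClosedIciTopology R] : IsClosed {M : Matrix n n R | M.PosSemidef} := by
  simp only [PosSemidef, IsHermitian, Set.ofPred_and, Set.ofPred_forall]
  refine (isClosed_eq continuous_id.matrix_conjTranspose continuous_id).inter <|
    isClosed_iInter fun c => isClosed_Ici.preimage ?_
  exact continuous_finsetSum _ fun i _ => continuous_finsetSum _ fun j _ =>
    (continuous_const.mul (continuous_apply_apply i j)).mul continuous_const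

theorem posSemidef_gram' {𝕜 n E : Type*} [RCLike 𝕜] [SeminormedAddCommGroup E]
    [InnerProductSpace 𝕜 E] (v : n → E) : (gram 𝕜 v).PosSemidef := by
  refine ⟨isHermitian_gram 𝕜 v, fun c => ?_⟩
  have h : ⟪c.sum fun i ci => ci • v i, c.sum fun j cj => cj • v j⟫_𝕜 =
      c.sum fun i ci => c.sum fun j cj => star ci * gram 𝕜 v i j * cj := by
    simp only [Finsupp.sum, sum_inner, inner_sum, inner_smul_left, inner_smul_right,
      gram_apply, Finset.mul_sum, RCLike.star_def]
    rw [Finset.sum_comm]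
    refine Finset.sum_congr rfl fun i _ => Finset.sum_congr rfl fun j _ => ?_
    ring
  rw [← h, RCLike.nonneg_iff]
  exact ⟨inner_self_nonneg, inner_self_im _⟩

theorem exists_ultrafilter_tendsto_gram {ι n : Type*} {E : ι → Type*}
    [∀ k, SeminormedAddCommGroup (E k)] [∀ k, InnerProductSpace ℝ (E k)] {v : ∀ k, n → E k}
    (hv : ∀ x, BddAbove (range fun k => ‖v k x‖)) (l : Filter ι) [l.NeBot] :
    ∃ u : Ultrafilter ι, ↑u ≤ l ∧ ∃ K, Tendsto (fun k => gram ℝ (v k)) u (𝓝 K) := by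
  choose C hC using hv
  let s : Set (Matrix n n ℝ) :=
    univ.pi fun x => univ.pi fun y => Metric.closedBall 0 (C x * C y)
  have hs : IsCompact s :=
    isCompact_univ_pi fun x => isCompact_univ_pi fun y => isCompact_closedBall _ _
  have hgram k : gram ℝ (v k) ∈ s := fun x _ y _ => by
    rw [Metric.mem_closedBall, dist_zero_right, gram_apply, Real.norm_eq_abs]
    exact (abs_real_inner_le_norm _ _).trans <| mul_le_mul (hC x ⟨k, rfl⟩) (hC y ⟨k, rfl⟩)
      (norm_nonneg _) ((norm_nonneg _).trans (hC x ⟨k, rfl⟩))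
  obtain ⟨u, hu, K, -, hK⟩ := hs.exists_ultrafilter_tendsto (.of_forall hgram) (l := l)
  exact ⟨u, hu, K, hK⟩

theorem PosSemidef.exists_gram_eq {X : Type u} {K : Matrix X X ℝ} (hK : K.PosSemidef) :
    ∃ (H : Type u) (_ : NormedAddCommGroup H) (_ : InnerProductSpace ℝ H) (_ : CompleteSpace H)
      (φ : X → H), gram ℝ φ = K := by
  -- `RKHS.OfKernel` takes operator-valued kernels: view `K` as a matrix of scalar multiplications.
  let K' : Matrix X X (ℝ →L[ℝ] ℝ) := K.map (algebraMap ℝ (ℝ →L[ℝ] ℝ))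
  have hK' : K'.PosSemidef := by
    have tfae := (RKHS.posSemidef_tfae (𝕜 := ℝ) (K := K')).out 0 2
    refine tfae.2 ⟨hK.1.map _ fun r => algebraMap_star_comm r, fun c => ?_⟩
    simp only [K', Finsupp.sum, map_apply]
    rw [Finset.sum_comm]
    simpa [Finsupp.sum, mul_comm, mul_left_comm] using hK.2 c
  have : Fact K'.PosSemidef := ⟨hK'⟩
  refine ⟨RKHS.OfKernel K', inferInstance, inferInstance, inferInstance,
    fun x => RKHS.kerFun (RKHS.OfKernel K') x 1, ?_⟩
  ext x y
  rw [gram_apply, ← RKHS.kernel_inner, RKHS.OfKernel.kernel_ofKernel]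
  simpa [K'] using hK.1.apply x y

section crossSqDist

variable {I J : Type*}

def crossSqDist (K : Matrix (I ⊕ J) (I ⊕ J) ℝ) (p : I × J) : ℝ :=
  K (.inl p.1) (.inl p.1) + K (.inr p.2) (.inr p.2) - 2 * K (.inl p.1) (.inr p.2)

theorem continuous_crossSqDist :
    Continuous (crossSqDist : Matrix (I ⊕ J) (I ⊕ J) ℝ → I × J → ℝ) :=
  continuous_pi fun p => by unfold crossSqDist; fun_prop

theorem crossSqDist_gram {E : Type*} [SeminormedAddCommGroup E] [InnerProductSpace ℝ E]
    (φ : I ⊕ J → E) (i : I) (j : J) :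
    crossSqDist (gram ℝ φ) (i, j) = ‖φ (.inl i) - φ (.inr j)‖ ^ 2 := by
  simp only [crossSqDist, gram_apply, norm_sub_sq_real, real_inner_self_eq_norm_sq]
  ring

end crossSqDist

theorem PosSemidef.nonempty_sqDistHilbertRepr {I : Type} {K : Matrix (I ⊕ I) (I ⊕ I) ℝ}
    (hK : K.PosSemidef) : Nonempty (SqDistHilbertRepr (crossSqDist K)) := by
  obtain ⟨H, _, _, _, φ, rfl⟩ := hK.exists_gram_eq
  exact ⟨{ H, α := φ ∘ .inl, β := φ ∘ .inr, repr := crossSqDist_gram φ }⟩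

end Matrix

namespace SqDistInnerRepr

variable {I : Type}

theorem norm_sub_eq_sqrt {a : I × I → ℝ} (r : SqDistInnerRepr a) (i j : I) :
    ‖r.α i - r.β j‖ = √(a (i, j)) := by
  rw [r.repr, Real.sqrt_sq (norm_nonneg _)]

theorem norm_α_sub_α_le {a : I × I → ℝ} (r : SqDistInnerRepr a) (i i' j : I) :
    ‖r.α i - r.α i'‖ ≤ √(a (i, j)) + √(a (i', j)) := by
  rw [← r.norm_sub_eq_sqrt, ← r.norm_sub_eq_sqrt, ← sub_sub_sub_cancel_right _ _ (r.β j)]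
  exact norm_sub_le _ _

theorem crossSqDist_gram_sub {a : I × I → ℝ} (r : SqDistInnerRepr a) (c : r.H) :
    Matrix.crossSqDist (Matrix.gram ℝ fun x => Sum.elim r.α r.β x - c) = a := by
  ext ⟨i, j⟩
  rw [Matrix.crossSqDist_gram, Sum.elim_inl, Sum.elim_inr, sub_sub_sub_cancel_right, r.repr]

theorem bddAbove_range_norm_sub_α {ι : Type*} {a : ι → I × I → ℝ}
    (r : ∀ k, SqDistInnerRepr (a k)) (ha : ∀ p, BddAbove (range fun k => a k p)) (i₀ : I)
    (x : I ⊕ I) : BddAbove (range fun k => ‖Sum.elim (r k).α (r k).β x - (r k).α i₀‖) := by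
  have hsqrt p : BddAbove (range fun k => √(a k p)) := (ha p).range_comp_left Real.sqrt_monotone
  cases x with
  | inl i =>
    exact ((hsqrt (i, i₀)).range_add (hsqrt (i₀, i₀))).range_mono _
      fun k => (r k).norm_α_sub_α_le i i₀ i₀
  | inr j =>
    exact (hsqrt (i₀, j)).range_mono _
      fun k => ((norm_sub_rev _ _).trans ((r k).norm_sub_eq_sqrt i₀ j)).le

end SqDistInnerRepr

open Matrix

theorem sq_dist_repr_closed_under_pointwise_limits {I : Type} [Nonempty I]
    (a : ℕ → I × I → ℝ) (b : I × I → ℝ)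
    (hlim : ∀ i j : I, Filter.Tendsto (fun n => a n (i, j)) Filter.atTop (nhds (b (i, j))))
    (hrepr : ∀ n : ℕ, Nonempty (SqDistInnerRepr (a n))) :
    Nonempty (SqDistHilbertRepr b) := by
  obtain ⟨i₀⟩ := ‹Nonempty I›
  let r n := (hrepr n).some
  let v n (x : I ⊕ I) : (r n).H := Sum.elim (r n).α (r n).β x - (r n).α i₀
  have hbdd (p : I × I) : BddAbove (range fun n => a n p) := (hlim p.1 p.2).bddAbove_range
  obtain ⟨u, hu, K, hK⟩ := exists_ultrafilter_tendsto_gram (v := v)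
    (SqDistInnerRepr.bddAbove_range_norm_sub_α r hbdd i₀) atTop
  have hKpsd : K.PosSemidef :=
    isClosed_setOf_posSemidef.mem_of_tendsto hK (.of_forall fun n => posSemidef_gram' (v n))
  have hKb : crossSqDist K = b := by
    refine tendsto_nhds_unique ((continuous_crossSqDist.tendsto K).comp hK) ?_
    simp only [Function.comp_def, v, SqDistInnerRepr.crossSqDist_gram_sub]
    exact (tendsto_pi_nhds.2 fun p : I × I => hlim p.1 p.2).mono_left hu
  exact hKb ▸ hKpsd.nonempty_sqDistHilbertRepr
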